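/- Let n, k, s be natural numbers with s ≥ 1, and let d = (d_1,…,d_s) be a multidegree with every d_i ≥ 2 and not (s = 1 and d_1 = 2). If δ(n,d,k) < 0, then δ(n,d,k,k') < 0 for every integer k' with −1 ≤ k' ≤ k−1, while δ(n,d,k,k) = 0. -/

import Mathlib

/-- Binomial coefficient on integers, with the convention `C(a, b) = 0`
whenever `a < 0` or `b < 0` (in particular `C(m, -1) = 0`). -/
def chooseZ (a b : ℤ) : ℤ :=
  if 0 ≤ a ∧ 0 ≤ b then (a.toNat.choose b.toNat : ℤ) else 0

/-- The expected dimension `δ(n, d, k, k')` of the locus of `k`-planes `Λ` in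
`V(f)` with `dim (Λ ∩ Λ') = k'`. -/
def deltaKL (n k : ℕ) {s : ℕ} (d : Fin s → ℕ) (k' : ℤ) : ℤ :=
  ((k : ℤ) - k') * ((n : ℤ) - (k : ℤ) + k' + 1)
    + ∑ i, chooseZ ((d i : ℤ) + k') k'
    - ∑ i, chooseZ ((d i : ℤ) + (k : ℤ)) (k : ℤ)

/-!
Put `g j = δ(n, d, k, j - 1)` for `j = 0, …, k + 1`, so that `g 0 = δ(n, d, k) < 0` and
`g (k + 1) = 0`. By Pascal's rule the second difference of `g` at `j` is
`-2 + Σ C(d_i + j - 1, j + 1)`, and the sum is at least `2` unless `d = (2)`; so `g` is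
convex. A convex sequence that is negative at one end of an interval and nonpositive at the
other is negative on the whole interval except possibly at the other end.
-/

open Finset

theorem neg_of_monotone_sub_of_neg_of_nonpos {α : Type*} [AddCommGroup α] [LinearOrder α]
    [IsOrderedAddMonoid α] {g : ℕ → α} (hg : Monotone fun i => g (i + 1) - g i)
    (h0 : g 0 < 0) {m : ℕ} (hm : g m ≤ 0) {j : ℕ} (hjm : j < m) : g j < 0 := by
  -- If the increment at `j` is `≤ 0`, so are all earlier ones and `g j ≤ g 0`;
  -- if it is `> 0`, so are all later ones and `g j < g m`.
  rcases le_or_gt (g (j + 1) - g j) 0 with hj | hj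
  · have hsum : ∑ i ∈ Ico 0 j, (g (i + 1) - g i) ≤ 0 :=
      sum_nonpos fun i hi => (hg (mem_Ico.1 hi).2.le).trans hj
    rw [sum_Ico_sub g (Nat.zero_le j)] at hsum
    exact lt_of_le_of_lt (sub_nonpos.1 hsum) h0
  · have hsum : 0 < ∑ i ∈ Ico j m, (g (i + 1) - g i) :=
      sum_pos (fun i hi => hj.trans_le (hg (mem_Ico.1 hi).1)) (nonempty_Ico.2 hjm)
    rw [sum_Ico_sub g hjm.le] at hsum
    exact lt_of_lt_of_le (sub_pos.1 hsum) hm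

theorem chooseZ_natCast (a b : ℕ) : chooseZ a b = a.choose b := by
  simp [chooseZ]

theorem chooseZ_of_neg_right (a : ℤ) {b : ℤ} (hb : b < 0) : chooseZ a b = 0 := by
  simp [chooseZ, hb.not_ge]

theorem chooseZ_nonneg (a b : ℤ) : 0 ≤ chooseZ a b := by
  unfold chooseZ; split_ifs <;> positivity

theorem chooseZ_succ_succ {x : ℤ} (hx : 0 ≤ x) (y : ℤ) :
    chooseZ (x + 1) (y + 1) = chooseZ x y + chooseZ x (y + 1) := by
  lift x to ℕ using hx
  rcases lt_trichotomy y (-1) with hy | rfl | hy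
  · simp only [chooseZ_of_neg_right _ (by omega : y + 1 < 0),
      chooseZ_of_neg_right _ (by omega : y < 0), add_zero]
  · simp [chooseZ]
    omega
  · lift y to ℕ using (by omega)
    have h := Nat.choose_succ_succ x y
    simp only [← Nat.cast_succ, chooseZ_natCast, h, Nat.cast_add]

theorem chooseZ_second_sub {x : ℤ} (hx : 0 ≤ x) (y : ℤ) :
    chooseZ (x + 2) (y + 2) - 2 * chooseZ (x + 1) (y + 1) + chooseZ x y = chooseZ x (y + 2) := by
  have h₂ := chooseZ_succ_succ (x := x + 1) (by omega) (y + 1)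
  have h₁ := chooseZ_succ_succ hx y
  have h₁' := chooseZ_succ_succ hx (y + 1)
  simp only [add_assoc, one_add_one_eq_two] at h₂ h₁'
  linear_combination h₂ - h₁ + h₁'

theorem one_le_chooseZ {a b : ℤ} (hb : 0 ≤ b) (hba : b ≤ a) : 1 ≤ chooseZ a b := by
  lift a to ℕ using hb.trans hba
  lift b to ℕ using hb
  rw [chooseZ_natCast]
  exact_mod_cast Nat.choose_pos (by omega)

theorem two_le_chooseZ {a b : ℤ} (hb : 1 ≤ b) (hba : b < a) : 2 ≤ chooseZ a b := by
  lift b to ℕ using by omega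
  lift a to ℕ using by omega
  rw [chooseZ_natCast]
  have h : (b + 1).choose b ≤ a.choose b := Nat.choose_le_choose b (by omega)
  rw [Nat.choose_succ_self_right] at h
  exact_mod_cast (by omega : 2 ≤ a.choose b)

theorem two_le_sum_chooseZ {s : ℕ} (hs : 1 ≤ s) {d : Fin s → ℕ} (hd : ∀ i, 2 ≤ d i)
    (hd2 : ¬(s = 1 ∧ ∀ i, d i = 2)) {k' : ℤ} (hk' : -1 ≤ k') :
    2 ≤ ∑ i, chooseZ ((d i : ℤ) + k') (k' + 2) := by
  by_cases h3 : ∃ i, 3 ≤ d i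
  · obtain ⟨i, hi⟩ := h3
    calc (2 : ℤ) ≤ chooseZ ((d i : ℤ) + k') (k' + 2) := two_le_chooseZ (by omega) (by omega)
      _ ≤ _ := single_le_sum (f := fun j => chooseZ ((d j : ℤ) + k') (k' + 2))
          (fun j _ => chooseZ_nonneg _ _) (mem_univ i)
  · push Not at h3
    have hs2 : 2 ≤ s := by
      by_contra hs2
      exact hd2 ⟨by omega, fun i => by have := hd i; have := h3 i; omega⟩
    calc (2 : ℤ) ≤ (univ : Finset (Fin s)).card • 1 := by simp; omega
      _ ≤ _ := card_nsmul_le_sum _ _ _ fun i _ => one_le_chooseZ (by omega) (by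
        have := hd i; omega)

section deltaKL

variable (n k : ℕ) {s : ℕ} (d : Fin s → ℕ)

theorem deltaKL_neg_one :
    deltaKL n k d (-1) = (k + 1 : ℤ) * ((n : ℤ) - (k : ℤ))
      - ∑ i, chooseZ ((d i : ℤ) + (k : ℤ)) (k : ℤ) := by
  simp only [deltaKL, chooseZ_of_neg_right _ (by norm_num : (-1 : ℤ) < 0), sum_const_zero]
  ring

theorem deltaKL_self : deltaKL n k d k = 0 := by
  simp [deltaKL]

theorem deltaKL_second_sub {k' : ℤ} (hk' : ∀ i, 0 ≤ (d i : ℤ) + k') :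
    deltaKL n k d (k' + 2) - 2 * deltaKL n k d (k' + 1) + deltaKL n k d k'
      = ∑ i, chooseZ ((d i : ℤ) + k') (k' + 2) - 2 := by
  have hsum := sum_congr rfl fun i (_ : i ∈ univ) => chooseZ_second_sub (hk' i) k'
  simp only [sum_add_distrib, sum_sub_distrib, ← mul_sum] at hsum
  simp only [deltaKL, ← add_assoc]
  linear_combination hsum

end deltaKL

theorem delta_negative_on_interval
    (n k s : ℕ) (hs : 1 ≤ s) (d : Fin s → ℕ) (hd : ∀ i, 2 ≤ d i)
    (hd2 : ¬(s = 1 ∧ ∀ i, d i = 2))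
    (hδ : (k + 1 : ℤ) * ((n : ℤ) - (k : ℤ))
        - ∑ i, chooseZ ((d i : ℤ) + (k : ℤ)) (k : ℤ) < 0) :
    (∀ k' : ℤ, -1 ≤ k' → k' ≤ (k : ℤ) - 1 → deltaKL n k d k' < 0) ∧
    deltaKL n k d (k : ℤ) = 0 := by
  set g : ℕ → ℤ := fun j => deltaKL n k d (j - 1)
  have hconvex : Monotone fun j => g (j + 1) - g j := monotone_nat_of_le_succ fun j => by
    have hsecond := deltaKL_second_sub n k d (k' := j - 1) fun i => by have := hd i; omega
    have hpos := two_le_sum_chooseZ hs hd hd2 (k' := j - 1) (by omega)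
    simp only [g]
    push_cast
    ring_nf at hsecond hpos ⊢
    linarith
  have hg0 : g 0 < 0 := by simpa [g, deltaKL_neg_one] using hδ
  have hgk : g (k + 1) ≤ 0 := by simp [g, deltaKL_self]
  refine ⟨fun k' hlo hhi => ?_, deltaKL_self n k d⟩
  have hj : ((k' + 1).toNat : ℤ) - 1 = k' := by omega
  simpa only [g, hj] using
    neg_of_monotone_sub_of_neg_of_nonpos hconvex hg0 hgk (j := (k' + 1).toNat) (by omega)
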